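/- Let C = {q₁,...,q_k} be linearly independent vectors in ℝ^d, locally optimal for volume with respect to P (for all v ∈ P \ C, u ∈ C: VOL(C) ≥ VOL(C − u + v)). Let p ∈ P, let G = span(C), and let p_G be the orthogonal projection of p onto G. Then p_G = Σ_{i=1}^k α_i q_i with |α_i| ≤ 1 for all i. -/

import Mathlib

abbrev Pt (d : ℕ) := EuclideanSpace ℝ (Fin d)

noncomputable def gvol {d : ℕ} {ι : Type} [Fintype ι] [DecidableEq ι]
    (v : ι → Pt d) : ℝ :=
  Real.sqrt (Matrix.det (Matrix.of fun i j => (inner ℝ (v i) (v j) : ℝ)))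

def LocallyOptimal {d k : ℕ} (P : Set (Pt d)) (q : Fin k → Pt d) : Prop :=
  Function.Injective q ∧ Set.range q ⊆ P ∧
    ∀ v ∈ P, v ∉ Set.range q → ∀ u : Fin k, gvol (Function.update q u v) ≤ gvol q

/-!
Write `p = ∑ β l • q l + w` with `w ⟂ span C`. Expanding the Gram determinant of
`C - q u + p` linearly in row `u` and then in column `u`, all cross terms vanish because `w`
is orthogonal to every `q i`, leaving `β u ^ 2 * det (gram C) + det (gram (C - q u + w))`.
The second term is a Gram determinant, hence nonnegative, so local optimality and
`det (gram C) > 0` force `β u ^ 2 ≤ 1`. Local optimality is only stated for `p ∉ C`, but for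
`p ∈ C` the replaced family is `C` itself or has a repeated vector.
-/

open Function Matrix
open scoped RealInnerProductSpace

section InnerMatrix

variable {E ι : Type*} [NormedAddCommGroup E] [InnerProductSpace ℝ E]

def innerMatrix (a b : ι → E) : Matrix ι ι ℝ := of fun i j => ⟪a i, b j⟫

theorem innerMatrix_self (a : ι → E) : innerMatrix a a = gram ℝ a := rfl

theorem transpose_innerMatrix (a b : ι → E) : (innerMatrix a b)ᵀ = innerMatrix b a := by
  ext i j
  exact real_inner_comm _ _

variable [DecidableEq ι]

theorem innerMatrix_update_left (a b : ι → E) (u : ι) (x : E) :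
    innerMatrix (update a u x) b = updateRow (innerMatrix a b) u fun j => ⟪x, b j⟫ := by
  ext i j
  by_cases hi : i = u
  · subst hi; simp [innerMatrix]
  · simp [innerMatrix, hi]

variable [Fintype ι]

theorem det_innerMatrix_update_left_add (a b : ι → E) (u : ι) (x y : E) :
    (innerMatrix (update a u (x + y)) b).det =
      (innerMatrix (update a u x) b).det + (innerMatrix (update a u y) b).det := by
  simp only [innerMatrix_update_left, inner_add_left]
  exact det_updateRow_add _ u (fun j => ⟪x, b j⟫) fun j => ⟪y, b j⟫

theorem det_innerMatrix_update_right_add (a b : ι → E) (u : ι) (x y : E) :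
    (innerMatrix a (update b u (x + y))).det =
      (innerMatrix a (update b u x)).det + (innerMatrix a (update b u y)).det := by
  simp only [← det_transpose (innerMatrix a _), transpose_innerMatrix,
    det_innerMatrix_update_left_add]

theorem det_innerMatrix_update_left_sum (a b : ι → E) (u : ι) (c : ι → ℝ) :
    (innerMatrix (update a u (∑ l, c l • a l)) b).det = c u * (innerMatrix a b).det := by
  rw [innerMatrix_update_left, ← smul_eq_mul, ← det_updateRow_sum]
  congr 2
  ext j
  simp [innerMatrix, sum_inner, real_inner_smul_left]

theorem det_innerMatrix_update_right_sum (a b : ι → E) (u : ι) (c : ι → ℝ) :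
    (innerMatrix a (update b u (∑ l, c l • b l))).det = c u * (innerMatrix a b).det := by
  simp only [← det_transpose (innerMatrix a _), transpose_innerMatrix,
    det_innerMatrix_update_left_sum]

theorem det_innerMatrix_update_left_eq_zero (a b : ι → E) (u : ι) {x : E}
    (hx : ∀ j, ⟪x, b j⟫ = 0) : (innerMatrix (update a u x) b).det = 0 :=
  det_eq_zero_of_row_eq_zero u fun j => by simp [innerMatrix, hx]

theorem det_innerMatrix_update_right_eq_zero (a b : ι → E) (u : ι) {x : E}
    (hx : ∀ i, ⟪a i, x⟫ = 0) : (innerMatrix a (update b u x)).det = 0 := by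
  rw [← det_transpose, transpose_innerMatrix]
  exact det_innerMatrix_update_left_eq_zero b a u fun i => by rw [real_inner_comm]; exact hx i

theorem det_gram_update_sum_add_of_forall_inner_eq_zero (q : ι → E) (β : ι → ℝ) {w : E}
    (hw : ∀ i, ⟪w, q i⟫ = 0) (u : ι) :
    (gram ℝ (update q u (∑ l, β l • q l + w))).det =
      β u ^ 2 * (gram ℝ q).det + (gram ℝ (update q u w)).det := by
  simp only [← innerMatrix_self, det_innerMatrix_update_left_add,
    det_innerMatrix_update_left_sum, det_innerMatrix_update_right_add,
    det_innerMatrix_update_right_sum, det_innerMatrix_update_left_eq_zero _ q u hw,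
    det_innerMatrix_update_right_eq_zero q q u fun i => by rw [real_inner_comm]; exact hw i]
  ring

theorem abs_le_one_of_det_gram_update_le {q : ι → E} (hq : LinearIndependent ℝ q) (β : ι → ℝ)
    {w : E} (hw : ∀ i, ⟪w, q i⟫ = 0) (u : ι)
    (h : (gram ℝ (update q u (∑ l, β l • q l + w))).det ≤ (gram ℝ q).det) : |β u| ≤ 1 := by
  rw [det_gram_update_sum_add_of_forall_inner_eq_zero q β hw u] at h
  have hq_pos := (posDef_gram_of_linearIndependent hq).det_pos
  have hw_nonneg := (posSemidef_gram ℝ (update q u w)).det_nonneg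
  rw [← sq_le_one_iff_abs_le_one]
  exact le_of_mul_le_mul_right (by linarith) hq_pos

end InnerMatrix

theorem LocallyOptimal.det_gram_update_le {d k : ℕ} {P : Set (Pt d)} {q : Fin k → Pt d}
    (hopt : LocallyOptimal P q) {v : Pt d} (hv : v ∈ P) (u : Fin k) :
    (gram ℝ (update q u v)).det ≤ (gram ℝ q).det := by
  by_cases hvq : v ∈ Set.range q
  · obtain ⟨j, rfl⟩ := hvq
    rcases eq_or_ne u j with rfl | hne
    · simp
    · rw [det_zero_of_row_eq hne (by ext; simp [hne.symm])]
      exact (posSemidef_gram ℝ q).det_nonneg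
  · exact (Real.sqrt_le_sqrt_iff (posSemidef_gram ℝ q).det_nonneg).mp (hopt.2.2 v hv hvq u)

/-- If `C = {q 0, …, q (k-1)}` is linearly independent and locally optimal for volume
with respect to `P`, then the orthogonal projection of any `p ∈ P` onto
`G = span C` can be written as `∑ α i • q i` with all `|α i| ≤ 1`. -/
theorem locallyOptimal_projection_coeffs {d k : ℕ} (P : Set (Pt d))
    (q : Fin k → Pt d) (hind : LinearIndependent ℝ q)
    (hopt : LocallyOptimal P q) (p : Pt d) (hp : p ∈ P) :
    ∃ α : Fin k → ℝ,
      (((Submodule.span ℝ (Set.range q)).orthogonalProjectionOnto p : Pt d)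
        = ∑ i, α i • q i) ∧ ∀ i, |α i| ≤ 1 := by
  set G := Submodule.span ℝ (Set.range q)
  rw [← G.starProjection_apply]
  obtain ⟨β, hβ⟩ := (Submodule.mem_span_range_iff_exists_fun ℝ).mp (G.starProjection_apply_mem p)
  have hw : ∀ i, ⟪p - G.starProjection p, q i⟫ = 0 := fun i =>
    G.inner_left_of_mem_orthogonal (Submodule.subset_span (Set.mem_range_self i))
      (G.sub_starProjection_mem_orthogonal p)
  have hp_eq : ∑ l, β l • q l + (p - G.starProjection p) = p := by
    rw [hβ, add_sub_cancel]
  refine ⟨β, hβ.symm, fun u => abs_le_one_of_det_gram_update_le hind β hw u ?_⟩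
  rw [hp_eq]
  exact hopt.det_gram_update_le hp u
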